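/- arXiv:1605.06276 — 3 statements merged into one kernel-verified Lean document; each statement's English description precedes it below -/
import Mathlib

section
/- The PQSQ potential u satisfies u(x) ≤ b_k + a_k x^2 for all x and all k: that is, u is the pointwise minimum over k of the parabolas b_k + a_k x^2, provided a_{k+1} ≤ a_k and b_{k+1} ≥ b_k for all k. -/
/-- Provided `a (k+1) ≤ a k` and `b (k+1) ≥ b k`, the PQSQ potential `u` is the
pointwise minimum of the parabolas `b k + a k x²`: in particular
`u x ≤ b k + a k * x ^ 2` for all `x` and all `k ≤ p`. -/
theorem pqsq_is_min_of_parabolas (p : ℕ) (r : ℕ → ℝ) (a b : ℕ → ℝ) (u : ℝ → ℝ)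
    (hr0 : r 0 = 0)
    (hr : ∀ j k : ℕ, j < k → k ≤ p → r j < r k)
    (hu : ∀ (x : ℝ) (j : ℕ), j < p → r j ≤ |x| → |x| < r (j + 1) → u x = b j + a j * x ^ 2)
    (hup : ∀ x : ℝ, r p ≤ |x| → u x = b p + a p * x ^ 2)
    (hcont : ∀ j < p, b j + a j * (r (j + 1)) ^ 2 = b (j + 1) + a (j + 1) * (r (j + 1)) ^ 2)
    (ha : ∀ k < p, a (k + 1) ≤ a k)
    (hb : ∀ k < p, b k ≤ b (k + 1)) :
    ∀ x : ℝ, (∀ k ≤ p, u x ≤ b k + a k * x ^ 2) ∧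
      IsLeast {y : ℝ | ∃ k ≤ p, y = b k + a k * x ^ 2} (u x) := by
  intro x
  classical
  set val : ℕ → ℝ := fun k => b k + a k * x ^ 2 with hval
  have hxsq : |x| ^ 2 = x ^ 2 := sq_abs x
  -- adjacent comparisons
  have key_up : ∀ i, i < p → |x| ≤ r (i + 1) → val i ≤ val (i + 1) := by
    intro i hi hx
    have hc := hcont i hi
    have hai := ha i hi
    have hrsq : x ^ 2 ≤ r (i + 1) ^ 2 := by
      rw [← hxsq]
      exact pow_le_pow_left₀ (abs_nonneg x) hx 2
    simp only [hval]
    nlinarith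
  have key_down : ∀ i, i < p → r (i + 1) ≤ |x| → val (i + 1) ≤ val i := by
    intro i hi hx
    have hc := hcont i hi
    have hai := ha i hi
    have hr1 : (0 : ℝ) ≤ r (i + 1) := by
      rw [← hr0]; exact le_of_lt (hr 0 (i + 1) (Nat.succ_pos i) hi)
    have hrsq : r (i + 1) ^ 2 ≤ x ^ 2 := by
      rw [← hxsq]
      exact pow_le_pow_left₀ hr1 hx 2
    simp only [hval]
    nlinarith
  -- find the segment
  let j := Nat.findGreatest (fun k => r k ≤ |x|) p
  have hj_le : j ≤ p := Nat.findGreatest_le p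
  have h0 : r 0 ≤ |x| := by rw [hr0]; exact abs_nonneg x
  have hj_spec : r j ≤ |x| :=
    Nat.findGreatest_spec (P := fun k => r k ≤ |x|) (Nat.zero_le p) h0
  have hj_big : j < p → |x| < r (j + 1) := by
    intro h
    have := Nat.findGreatest_is_greatest (Nat.lt_succ_self j) h
    exact lt_of_not_ge this
  have hux : u x = val j := by
    rcases eq_or_lt_of_le hj_le with h | h
    · rw [h] at hj_spec ⊢; exact hup x hj_spec
    · exact hu x j h hj_spec (hj_big h)
  -- downward chain: for k ≤ m ≤ p with r m ≤ |x|, val m ≤ val k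
  have down : ∀ k m : ℕ, k ≤ m → m ≤ p → r m ≤ |x| → val m ≤ val k := by
    intro k m hkm
    induction m, hkm using Nat.le_induction with
    | base => intro _ _; exact le_refl _
    | succ m hm ih =>
      intro hmp hx
      have hmp' : m < p := hmp
      have h1 : val (m + 1) ≤ val m := key_down m hmp' hx
      have h2 : r m ≤ |x| := le_trans (le_of_lt (hr m (m + 1) (Nat.lt_succ_self m) hmp)) hx
      exact le_trans h1 (ih (le_of_lt hmp') h2)
  -- upward chain: for j ≤ m ≤ p with |x| < r (j+1), val j ≤ val m
  have up : ∀ m : ℕ, j ≤ m → m ≤ p → (j < p → |x| < r (j + 1)) → val j ≤ val m := by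
    intro m hjm
    induction m, hjm using Nat.le_induction with
    | base => intro _ _; exact le_refl _
    | succ m hm ih =>
      intro hmp hx
      have hmp' : m < p := hmp
      have hjp : j < p := lt_of_le_of_lt hm hmp'
      have hxr : |x| ≤ r (m + 1) := by
        rcases eq_or_lt_of_le (Nat.succ_le_succ hm) with h | h
        · have hjm : j = m := Nat.succ_injective h
          rw [← hjm]; exact le_of_lt (hx hjp)
        · exact le_trans (le_of_lt (hx hjp)) (le_of_lt (hr (j + 1) (m + 1) h hmp))
      exact le_trans (ih (le_of_lt hmp') hx) (key_up m hmp' hxr)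
  have main : ∀ k ≤ p, u x ≤ val k := by
    intro k hk
    rw [hux]
    rcases le_or_gt k j with h | h
    · exact down k j h hj_le hj_spec
    · exact up k (le_of_lt h) hk hj_big
  refine ⟨main, ⟨⟨j, hj_le, hux⟩, ?_⟩⟩
  rintro y ⟨k, hk, rfl⟩
  exact main k hk
end

section
/- The splitting algorithm for minimizing a minorant function u = min(q_1, ..., q_n), where each q_i has a unique global minimizer, terminates in a finite number of steps: at each iteration either the active index set I(x) = {i : u(x) = q_i(x)} is unchanged (and the algorithm stops), or the value u strictly decreases; since u takes values among finitely many candidate minima {u(argmin q_i)}, the iteration cannot continue indefinitely. -/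
/-- Termination of the splitting algorithm minimizing `u = min (q 1, …, q n)` where
each `q i` has a unique global minimizer `mpt i`: along the iteration, `u` strictly
decreases whenever the active index set changes, and after finitely many steps the
active index set stabilizes (the stopping criterion is met). -/
theorem splitting_algorithm_terminates (d n : ℕ)
    (q : Fin (n + 1) → (Fin d → ℝ) → ℝ)
    (mpt : Fin (n + 1) → Fin d → ℝ)
    (hmin : ∀ i, ∀ y, q i (mpt i) ≤ q i y)
    (huniq : ∀ i, ∀ y, (∀ z, q i y ≤ q i z) → y = mpt i)
    (u : (Fin d → ℝ) → ℝ)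
    (hu : ∀ y, u y = Finset.univ.inf' Finset.univ_nonempty (fun i => q i y))
    (x : ℕ → Fin d → ℝ)
    (hstep : ∀ t, ∃ i : Fin (n + 1), q i (x t) = u (x t) ∧ x (t + 1) = mpt i ∧
      ∀ j : Fin (n + 1), q j (x t) = u (x t) → u (mpt i) ≤ u (mpt j)) :
    (∀ t, {i | q i (x t) = u (x t)} ≠ {i | q i (x (t + 1)) = u (x (t + 1))} →
      u (x (t + 1)) < u (x t)) ∧
    ∃ T, {i | q i (x T) = u (x T)} = {i | q i (x (T + 1)) = u (x (T + 1))} := by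
  have hle : ∀ y i, u y ≤ q i y := by
    intro y i
    rw [hu]
    exact Finset.inf'_le _ (Finset.mem_univ i)
  have key : ∀ t, u (x (t + 1)) ≤ u (x t) ∧
      (u (x (t + 1)) = u (x t) → x (t + 1) = x t) := by
    intro t
    obtain ⟨i, hqi, hx, _⟩ := hstep t
    have h1 : u (x (t + 1)) ≤ q i (mpt i) := by
      rw [hx]; exact hle _ i
    have h2 : q i (mpt i) ≤ q i (x t) := hmin i _
    refine ⟨by linarith, ?_⟩
    intro heq
    have h3 : ∀ z, q i (x t) ≤ q i z := by
      intro z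
      have : q i (x t) ≤ q i (mpt i) := by linarith
      exact le_trans this (hmin i z)
    have hxt := huniq i _ h3
    rw [hx, ← hxt]
  have part1 : ∀ t, {i | q i (x t) = u (x t)} ≠ {i | q i (x (t + 1)) = u (x (t + 1))} →
      u (x (t + 1)) < u (x t) := by
    intro t hne
    rcases lt_or_eq_of_le (key t).1 with h | h
    · exact h
    · exact absurd (by rw [(key t).2 h]) hne
  refine ⟨part1, ?_⟩
  by_contra hno
  push_neg at hno
  have hanti : StrictAnti (fun t => u (x t)) :=
    strictAnti_nat_of_succ_lt (fun t => part1 t (hno t))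
  have hinj : Function.Injective (fun t : ℕ => u (x (t + 1))) := by
    intro a b h
    have := hanti.injective h
    omega
  have hsub : Set.range (fun t : ℕ => u (x (t + 1))) ⊆
      ↑(Finset.image (fun j => u (mpt j)) Finset.univ) := by
    rintro _ ⟨t, rfl⟩
    obtain ⟨i, _, hx, _⟩ := hstep t
    simp only [Finset.coe_image, Finset.coe_univ, Set.image_univ, Set.mem_range]
    exact ⟨i, by rw [hx]⟩
  exact Set.infinite_range_of_injective hinj
    (Set.Finite.subset (Finset.finite_toSet _) hsub)
end

section
/- One iteration of the PQSQ mean value algorithm does not increase the PQSQ error: if for the current estimate c ∈ ℝ the index sets R_s = {i : r_s ≤ |x_i − c| < r_{s+1}} are formed and c' = (Σ_s a_s Σ_{i ∈ R_s} x_i)/(Σ_s a_s |R_s|) (assuming the denominator is nonzero), then Σ_i u(x_i − c') ≤ Σ_i u(x_i − c), where u is the PQSQ potential with nonincreasing coefficients a_s and nondecreasing offsets b_s. -/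
/-!
At the current estimate `c` each residual `x i - c` lies in exactly one interval
`r s ≤ |·| < r (s + 1)`, so the PQSQ error at `c` is the value at `c` of the weighted quadratic
`t ↦ Σ_i (b s_i + a s_i (x i - t)²)`, whose minimiser is the weighted mean `c'`. Since `u` is
the minimum of its parabolas, this quadratic majorises the PQSQ error everywhere, so
`Σ u (x i - c') ≤ quadratic(c') ≤ quadratic(c) = Σ u (x i - c)`.
-/

open Finset

theorem Finset.sum_mul_sq_sub_centerMass_le {ι : Type*} (s : Finset ι) {w : ι → ℝ}
    (hw : ∀ i ∈ s, 0 ≤ w i) (y : ι → ℝ) (t : ℝ) :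
    ∑ i ∈ s, w i * (y i - s.centerMass w y) ^ 2 ≤ ∑ i ∈ s, w i * (y i - t) ^ 2 := by
  set W := ∑ i ∈ s, w i
  set m := s.centerMass w y
  by_cases hW : W = 0
  · -- all weights vanish, so both sides are `0` whatever the junk value of the centre
    have hw0 : ∀ i ∈ s, w i = 0 := (sum_eq_zero_iff_of_nonneg hw).1 hW
    have hzero : ∀ v : ι → ℝ, ∑ i ∈ s, w i * v i = 0 := fun v =>
      sum_eq_zero fun i hi => by rw [hw0 i hi, zero_mul]
    rw [hzero, hzero]
  have hmean : m * W = ∑ i ∈ s, w i * y i := by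
    simp only [m, W, centerMass, smul_eq_mul, inv_mul_eq_div]
    exact div_mul_cancel₀ _ hW
  calc ∑ i ∈ s, w i * (y i - m) ^ 2
      ≤ ∑ i ∈ s, w i * (y i - m) ^ 2 + W * (m - t) ^ 2 :=
        le_add_of_nonneg_right (mul_nonneg (sum_nonneg hw) (sq_nonneg _))
    _ = ∑ i ∈ s, w i * (y i - m) ^ 2 + 2 * (m - t) * ∑ i ∈ s, w i * y i
          - (m - t) * (m + t) * W := by rw [← hmean]; ring
    _ = ∑ i ∈ s, w i * (y i - t) ^ 2 := by
      rw [mul_sum, mul_sum, ← sum_add_distrib, ← sum_sub_distrib]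
      exact sum_congr rfl fun i _ => by ring

section IntervalIndex

variable {r : ℕ → ℝ} {p : ℕ} {z : ℝ}

/-- The index `s ≤ p` of the interval `r s ≤ z < r (s + 1)` containing `z`, the last interval
`r p ≤ z` being unbounded. -/
noncomputable def intervalIndex (r : ℕ → ℝ) (p : ℕ) (z : ℝ) : ℕ :=
  Nat.findGreatest (fun k => r k ≤ z) p

theorem intervalIndex_le : intervalIndex r p z ≤ p :=
  Nat.findGreatest_le p

theorem intervalIndex_eq_iff (hr : MonotoneOn r (Set.Iic p)) (hz : r 0 ≤ z) {s : ℕ}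
    (hs : s ≤ p) : intervalIndex r p z = s ↔ r s ≤ z ∧ (s < p → z < r (s + 1)) := by
  rw [intervalIndex, Nat.findGreatest_eq_iff]
  constructor
  · rintro ⟨-, hle, hgt⟩
    refine ⟨?_, fun hsp => not_le.1 (hgt s.lt_succ_self hsp)⟩
    rcases Nat.eq_zero_or_pos s with rfl | hpos
    · exact hz
    · exact hle hpos.ne'
  · rintro ⟨hle, hlt⟩
    refine ⟨hs, fun _ => hle, fun n hsn hnp => not_le.2 ?_⟩
    exact (hlt (hsn.trans_le hnp)).trans_le (hr (Set.mem_Iic.2 (by omega)) hnp hsn)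

theorem intervalIndex_spec (hr : MonotoneOn r (Set.Iic p)) (hz : r 0 ≤ z) :
    r (intervalIndex r p z) ≤ z ∧ (intervalIndex r p z < p → z < r (intervalIndex r p z + 1)) :=
  (intervalIndex_eq_iff hr hz intervalIndex_le).1 rfl

theorem apply_eq_at_intervalIndex_abs {a b : ℕ → ℝ} {u : ℝ → ℝ} (hr : MonotoneOn r (Set.Iic p))
    (hr0 : r 0 ≤ 0)
    (hu : ∀ (z : ℝ) (s : ℕ), s < p → r s ≤ |z| → |z| < r (s + 1) → u z = b s + a s * z ^ 2)
    (hup : ∀ z : ℝ, r p ≤ |z| → u z = b p + a p * z ^ 2) (z : ℝ) :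
    u z = b (intervalIndex r p |z|) + a (intervalIndex r p |z|) * z ^ 2 := by
  obtain ⟨hle, hlt⟩ := intervalIndex_spec hr (hr0.trans (abs_nonneg z))
  rcases intervalIndex_le.lt_or_eq with hsp | hsp
  · exact hu z _ hsp hle (hlt hsp)
  · rw [hsp] at hle ⊢
    exact hup z hle

theorem sum_range_sum_eq_sum_intervalIndex {ι : Type*} [Fintype ι]
    (hr : MonotoneOn r (Set.Iic p)) {z : ι → ℝ} (hz : ∀ i, r 0 ≤ z i) {R : ℕ → Finset ι}
    (hR : ∀ s < p, R s = univ.filter fun i => r s ≤ z i ∧ z i < r (s + 1))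
    (hRp : R p = univ.filter fun i => r p ≤ z i) (f : ℕ → ι → ℝ) :
    ∑ s ∈ range (p + 1), ∑ i ∈ R s, f s i = ∑ i, f (intervalIndex r p (z i)) i := by
  have hRidx : ∀ s ∈ range (p + 1), R s = univ.filter fun i => intervalIndex r p (z i) = s := by
    intro s hs
    have hsp : s ≤ p := Nat.lt_succ_iff.1 (mem_range.1 hs)
    ext i
    rw [mem_filter, intervalIndex_eq_iff hr (hz i) hsp]
    rcases hsp.lt_or_eq with hsp | rfl
    · simp [hR s hsp, hsp]
    · simp [hRp]
  calc ∑ s ∈ range (p + 1), ∑ i ∈ R s, f s i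
      = ∑ s ∈ range (p + 1), ∑ i ∈ univ with intervalIndex r p (z i) = s,
          f (intervalIndex r p (z i)) i := by
        refine sum_congr rfl fun s hs => ?_
        rw [hRidx s hs]
        exact sum_congr rfl fun i hi => by rw [(mem_filter.1 hi).2]
    _ = ∑ i, f (intervalIndex r p (z i)) i :=
        sum_fiberwise_of_maps_to (fun _ _ => mem_range.2 (Nat.lt_succ_of_le intervalIndex_le)) _

end IntervalIndex

theorem pqsq_mean_iteration_decreases_general (N p : ℕ) (x : Fin N → ℝ) (c : ℝ)
    (r : ℕ → ℝ) (a b : ℕ → ℝ) (u : ℝ → ℝ)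
    (hr0 : r 0 = 0)
    (hr : ∀ j k : ℕ, j < k → k ≤ p → r j < r k)
    (ha0 : ∀ s ≤ p, 0 ≤ a s)
    (hu : ∀ (z : ℝ) (s : ℕ), s < p → r s ≤ |z| → |z| < r (s + 1) → u z = b s + a s * z ^ 2)
    (hup : ∀ z : ℝ, r p ≤ |z| → u z = b p + a p * z ^ 2)
    (humin : ∀ (z : ℝ), ∀ s ≤ p, u z ≤ b s + a s * z ^ 2)
    (R : ℕ → Finset (Fin N))
    (hR : ∀ s < p, R s = Finset.univ.filter fun i => r s ≤ |x i - c| ∧ |x i - c| < r (s + 1))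
    (hRp : R p = Finset.univ.filter fun i => r p ≤ |x i - c|) :
    ∑ i, u (x i -
        (∑ s ∈ Finset.range (p + 1), a s * ∑ i ∈ R s, x i) /
        (∑ s ∈ Finset.range (p + 1), a s * (R s).card))
      ≤ ∑ i, u (x i - c) := by
  have hmono : MonotoneOn r (Set.Iic p) := fun j _ k hk hjk =>
    hjk.eq_or_lt.elim (fun h => h ▸ le_rfl) fun h => (hr j k h hk).le
  set ℓ : Fin N → ℕ := fun i => intervalIndex r p |x i - c|
  have resum := sum_range_sum_eq_sum_intervalIndex hmono
    (fun i => hr0.trans_le (abs_nonneg (x i - c))) hR hRp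
  have hnum : ∑ s ∈ range (p + 1), a s * ∑ i ∈ R s, x i = ∑ i, a (ℓ i) * x i := by
    simp only [mul_sum]
    exact resum fun s i => a s * x i
  have hcard : ∑ s ∈ range (p + 1), a s * (R s).card = ∑ i, a (ℓ i) := by
    simp only [← nsmul_eq_mul', ← sum_const]
    exact resum fun s _ => a s
  have hmean : (∑ i, a (ℓ i) * x i) / ∑ i, a (ℓ i) = univ.centerMass (fun i => a (ℓ i)) x := by
    simp only [centerMass, smul_eq_mul, inv_mul_eq_div]
  rw [hnum, hcard, hmean]
  calc ∑ i, u (x i - univ.centerMass (fun i => a (ℓ i)) x)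
      ≤ ∑ i, (b (ℓ i) + a (ℓ i) * (x i - univ.centerMass (fun i => a (ℓ i)) x) ^ 2) :=
        sum_le_sum fun i _ => humin _ _ intervalIndex_le
    _ ≤ ∑ i, (b (ℓ i) + a (ℓ i) * (x i - c) ^ 2) := by
        simp only [sum_add_distrib]
        exact add_le_add le_rfl <|
          univ.sum_mul_sq_sub_centerMass_le (fun i _ => ha0 _ intervalIndex_le) x c
    _ = ∑ i, u (x i - c) :=
        sum_congr rfl fun i _ => (apply_eq_at_intervalIndex_abs hmono hr0.le hu hup _).symm

/-- One iteration of the PQSQ mean-value algorithm does not increase the PQSQ error: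
with index sets `R s = {i : r s ≤ |x i - c| < r (s+1)}` and the update
`c' = (Σ_s a s Σ_{i ∈ R s} x i) / (Σ_s a s |R s|)`, one has
`Σ_i u (x i - c') ≤ Σ_i u (x i - c)`. -/
theorem pqsq_mean_iteration_decreases (N p : ℕ) (x : Fin N → ℝ) (c : ℝ)
    (r : ℕ → ℝ) (a b : ℕ → ℝ) (u : ℝ → ℝ)
    (hr0 : r 0 = 0)
    (hr : ∀ j k : ℕ, j < k → k ≤ p → r j < r k)
    (ha0 : ∀ s ≤ p, 0 ≤ a s)
    (hadec : ∀ s < p, a (s + 1) ≤ a s)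
    (hbinc : ∀ s < p, b s ≤ b (s + 1))
    (hcont : ∀ s < p, b s + a s * (r (s + 1)) ^ 2 = b (s + 1) + a (s + 1) * (r (s + 1)) ^ 2)
    (hu : ∀ (z : ℝ) (s : ℕ), s < p → r s ≤ |z| → |z| < r (s + 1) → u z = b s + a s * z ^ 2)
    (hup : ∀ z : ℝ, r p ≤ |z| → u z = b p + a p * z ^ 2)
    (humin : ∀ (z : ℝ), ∀ s ≤ p, u z ≤ b s + a s * z ^ 2)
    (R : ℕ → Finset (Fin N))
    (hR : ∀ s < p, R s = Finset.univ.filter fun i => r s ≤ |x i - c| ∧ |x i - c| < r (s + 1))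
    (hRp : R p = Finset.univ.filter fun i => r p ≤ |x i - c|)
    (hden : (∑ s ∈ Finset.range (p + 1), a s * (R s).card) ≠ 0) :
    ∑ i, u (x i -
        (∑ s ∈ Finset.range (p + 1), a s * ∑ i ∈ R s, x i) /
        (∑ s ∈ Finset.range (p + 1), a s * (R s).card))
      ≤ ∑ i, u (x i - c) :=
  pqsq_mean_iteration_decreases_general N p x c r a b u hr0 hr ha0 hu hup humin R hR hRp
end
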